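/- In the approximate path union procedure: if R(x) contains all nodes at distance at most h from x in G, B_{i*} = {v ∈ R(x) : dist_{G[R(x)]}(v, y) ≤ i*·h} for some i* ≤ ⌈log m⌉ + 1, and F = {v ∈ B_{i*} : dist_{G[B_{i*}]}(x, v) ≤ h}, then P(x, y, h, G) ⊆ F ⊆ P(x, y, (log m + 3)·h, G), where P(x, y, D, G) = {v : dist_G(x, v) + dist_G(v, y) ≤ D}. -/

import Mathlib

open scoped ENNReal

namespace Paper

variable {V : Type*}

/-- Total weight of a path given as a list of vertices. -/
noncomputable def pathWeight (w : V → V → ℝ≥0∞) : List V → ℝ≥0∞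
  | [] => 0
  | [_] => 0
  | a :: b :: rest => w a b + pathWeight w (b :: rest)

/-- `p` is a path (walk) from `x` to `y`; non-edges have weight `⊤`. -/
def IsPath (x y : V) (p : List V) : Prop :=
  p ≠ [] ∧ p.head? = some x ∧ p.getLast? = some y

/-- Shortest-path distance from `x` to `y` (`⊤` if unreachable). -/
noncomputable def gdist (w : V → V → ℝ≥0∞) (x y : V) : ℝ≥0∞ :=
  sInf {c | ∃ p, IsPath x y p ∧ pathWeight w p = c}

/-- The path union `P(x, y, D, G)`: all nodes on some `x`-`y` path of weight at most `D`. -/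
def pathUnion (w : V → V → ℝ≥0∞) (x y : V) (D : ℝ≥0∞) : Set V :=
  {v | ∃ p, IsPath x y p ∧ pathWeight w p ≤ D ∧ v ∈ p}

open Classical in
/-- Weight function of the subgraph induced by the node set `Q`. -/
noncomputable def inducedW (w : V → V → ℝ≥0∞) (Q : Set V) : V → V → ℝ≥0∞ :=
  fun u v => if u ∈ Q ∧ v ∈ Q then w u v else ⊤

/-- `h`-hop distance: minimum weight over paths with at most `h` edges. -/
noncomputable def hopDist (w : V → V → ℝ≥0∞) (h : ℕ) (x y : V) : ℝ≥0∞ :=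
  sInf {c | ∃ p, IsPath x y p ∧ p.length ≤ h + 1 ∧ pathWeight w p = c}

/-- The `h`-hop path union `P^h(x, y, D, G)`. -/
def hopPathUnion (w : V → V → ℝ≥0∞) (h : ℕ) (x y : V) (D : ℝ≥0∞) : Set V :=
  {v | ∃ p, IsPath x y p ∧ p.length ≤ h + 1 ∧ pathWeight w p ≤ D ∧ v ∈ p}

end Paper

namespace Paper

section Aux

variable {V : Type*}

lemma pathWeight_append (w : V → V → ℝ≥0∞) (a : V) :
    ∀ (l₁ l₂ : List V), pathWeight w (l₁ ++ a :: l₂) =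
      pathWeight w (l₁ ++ [a]) + pathWeight w (a :: l₂)
  | [], l₂ => by simp [pathWeight]
  | [b], l₂ => by simp [pathWeight, add_assoc]
  | b :: c :: l₁, l₂ => by
      have ih := pathWeight_append w a (c :: l₁) l₂
      simp only [List.cons_append, pathWeight, List.append_eq] at ih ⊢
      rw [ih, add_assoc]

lemma head?_append_cons (l : List V) (a : V) (s : List V) :
    (l ++ a :: s).head? = (l ++ [a]).head? := by cases l <;> rfl

lemma gdist_le_pathWeight (w : V → V → ℝ≥0∞) {x y : V} {p : List V} (hp : IsPath x y p) :
    gdist w x y ≤ pathWeight w p := sInf_le ⟨p, hp, rfl⟩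

lemma pathWeight_le_pathWeight {w w' : V → V → ℝ≥0∞} (hw : ∀ u v, w u v ≤ w' u v) :
    ∀ p : List V, pathWeight w p ≤ pathWeight w' p
  | [] => le_rfl
  | [_] => le_rfl
  | a :: b :: r => add_le_add (hw a b) (pathWeight_le_pathWeight hw (b :: r))

lemma gdist_mono {w w' : V → V → ℝ≥0∞} (hw : ∀ u v, w u v ≤ w' u v) (x y : V) :
    gdist w x y ≤ gdist w' x y := by
  refine le_sInf ?_
  rintro c ⟨p, hp, rfl⟩
  exact (gdist_le_pathWeight w hp).trans (pathWeight_le_pathWeight hw p)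

lemma le_inducedW (w : V → V → ℝ≥0∞) (Q : Set V) (u v : V) : w u v ≤ inducedW w Q u v := by
  unfold inducedW
  split_ifs
  · exact le_rfl
  · exact le_top

lemma pathWeight_inducedW (w : V → V → ℝ≥0∞) (Q : Set V) :
    ∀ p : List V, (∀ z ∈ p, z ∈ Q) → pathWeight (inducedW w Q) p = pathWeight w p
  | [], _ => rfl
  | [_], _ => rfl
  | a :: b :: r, hm => by
      simp only [pathWeight]
      rw [pathWeight_inducedW w Q (b :: r) (fun z hz => hm z (List.mem_cons_of_mem _ hz))]
      congr 1
      unfold inducedW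
      rw [if_pos ⟨hm a (by simp), hm b (by simp)⟩]

lemma pathWeight_eq_nat {w : V → V → ℝ≥0∞} (hunw : ∀ u u' : V, w u u' = 1 ∨ w u u' = ⊤) :
    ∀ p : List V, (∃ k : ℕ, pathWeight w p = k) ∨ pathWeight w p = ⊤
  | [] => Or.inl ⟨0, by simp [pathWeight]⟩
  | [_] => Or.inl ⟨0, by simp [pathWeight]⟩
  | a :: b :: r => by
      rcases hunw a b with h1 | h1
      · rcases pathWeight_eq_nat hunw (b :: r) with ⟨k, hk⟩ | hk
        · exact Or.inl ⟨k + 1, by simp [pathWeight, h1, hk]; push_cast; ring⟩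
        · exact Or.inr (by simp [pathWeight, hk])
      · exact Or.inr (by simp [pathWeight, h1])

lemma split_path (w : V → V → ℝ≥0∞) {x y v : V} {p : List V}
    (hp : IsPath x y p) (hv : v ∈ p) :
    ∃ p₁ p₂, IsPath x v p₁ ∧ IsPath v y p₂ ∧
      pathWeight w p₁ + pathWeight w p₂ = pathWeight w p ∧
      (∀ z ∈ p₁, z ∈ p) ∧ (∀ z ∈ p₂, z ∈ p) := by
  obtain ⟨q, r, rfl⟩ := List.append_of_mem hv
  obtain ⟨hne, hhd, hlast⟩ := hp
  refine ⟨q ++ [v], v :: r, ⟨by simp, ?_, ?_⟩, ⟨by simp, rfl, ?_⟩, ?_, ?_, ?_⟩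
  · rw [← head?_append_cons q v r]; exact hhd
  · rw [show q ++ [v] = q ++ v :: ([] : List V) from rfl, List.getLast?_append_cons]; rfl
  · rw [List.getLast?_append_cons] at hlast; exact hlast
  · exact (pathWeight_append w v q r).symm
  · intro z hz
    simp only [List.mem_append, List.mem_cons, List.mem_singleton] at hz ⊢
    tauto
  · intro z hz
    simp only [List.mem_append, List.mem_cons] at hz ⊢
    tauto

lemma concat_path (w : V → V → ℝ≥0∞) {x v y : V} {p q : List V}
    (hp : IsPath x v p) (hq : IsPath v y q) :
    ∃ r, IsPath x y r ∧ pathWeight w r = pathWeight w p + pathWeight w q ∧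
      ∀ z ∈ r, z ∈ p ∨ z ∈ q := by
  obtain ⟨hpne, hpx, hpv⟩ := hp
  obtain ⟨hqne, hqv, hqy⟩ := hq
  cases q with
  | nil => exact absurd rfl hqne
  | cons a t =>
    have hav : a = v := by simpa using hqv
    subst hav
    have hpde : p.dropLast ++ [a] = p :=
      List.dropLast_append_getLast? a (by rw [hpv]; rfl)
    refine ⟨p.dropLast ++ a :: t, ⟨by simp, ?_, ?_⟩, ?_, ?_⟩
    · rw [head?_append_cons, hpde]; exact hpx
    · rw [List.getLast?_append_cons]; exact hqy
    · rw [pathWeight_append, hpde]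
    · intro z hz
      rcases List.mem_append.mp hz with hz | hz
      · exact Or.inl (List.dropLast_subset _ hz)
      · exact Or.inr hz

lemma gdist_attained {w : V → V → ℝ≥0∞} (hunw : ∀ u u' : V, w u u' = 1 ∨ w u u' = ⊤)
    {x y : V} {n : ℕ} (hle : gdist w x y ≤ n) :
    ∃ (k : ℕ) (p : List V), IsPath x y p ∧ pathWeight w p = k ∧ (k : ℝ≥0∞) = gdist w x y := by
  have h1 : gdist w x y < (n : ℝ≥0∞) + 1 :=
    lt_of_le_of_lt hle (by exact_mod_cast Nat.lt_succ_self n)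
  rw [gdist, sInf_lt_iff] at h1
  obtain ⟨c, ⟨p, hp, rfl⟩, hc⟩ := h1
  have hT : ∃ k : ℕ, ∃ p : List V, IsPath x y p ∧ pathWeight w p = (k : ℝ≥0∞) := by
    rcases pathWeight_eq_nat hunw p with ⟨k, hk⟩ | hk
    · exact ⟨k, p, hp, hk⟩
    · rw [hk] at hc; exact absurd hc (by simp)
  classical
  obtain ⟨p₀, hp₀, hw₀⟩ := Nat.find_spec hT
  refine ⟨Nat.find hT, p₀, hp₀, hw₀, le_antisymm ?_ ?_⟩
  · refine le_sInf ?_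
    rintro c ⟨p', hp', rfl⟩
    rcases pathWeight_eq_nat hunw p' with ⟨k, hk⟩ | hk
    · rw [hk]
      exact_mod_cast Nat.find_min' hT ⟨p', hp', hk⟩
    · rw [hk]; exact le_top
  · exact sInf_le ⟨p₀, hp₀, hw₀⟩

end Aux

end Paper

/-- approximate path union is a good approximation:
`P(x, y, h, G) ⊆ F ⊆ P(x, y, (log m + 3)·h, G)`, where
`P(x, y, D, G) = {v : dist_G(x,v) + dist_G(v,y) ≤ D}`. -/
theorem stmt14 {V : Type*} [Fintype V] (w : V → V → ℝ≥0∞)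
    (hunw : ∀ u u' : V, w u u' = 1 ∨ w u u' = ⊤)
    (m h istar : ℕ) (hm : 2 ≤ m) (hh : 1 ≤ h)
    (histar2 : 2 ≤ istar) (histar : istar ≤ ⌈Real.logb 2 m⌉₊ + 1)
    (x y : V) (R B F : Set V)
    (hR : ∀ v, Paper.gdist w x v ≤ (h : ℝ≥0∞) → v ∈ R)
    (hB : B = {v | v ∈ R ∧
      Paper.gdist (Paper.inducedW w R) v y ≤ ((istar * h : ℕ) : ℝ≥0∞)})
    (hF : F = {v | v ∈ B ∧ Paper.gdist (Paper.inducedW w B) x v ≤ (h : ℝ≥0∞)}) :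
    {v | Paper.gdist w x v + Paper.gdist w v y ≤ (h : ℝ≥0∞)} ⊆ F ∧
      F ⊆ {v | Paper.gdist w x v + Paper.gdist w v y ≤
        ENNReal.ofReal (Real.logb 2 m + 3) * (h : ℝ≥0∞)} := by
  open Paper in
  constructor
  · -- lower inclusion
    intro v hv
    simp only [Set.mem_setOf_eq] at hv
    have hD1 : Paper.gdist w x v ≤ ((h : ℕ) : ℝ≥0∞) := le_self_add.trans hv
    have hD2 : Paper.gdist w v y ≤ ((h : ℕ) : ℝ≥0∞) := le_add_self.trans hv
    obtain ⟨k1, p1, hp1, hw1, hk1⟩ := Paper.gdist_attained hunw hD1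
    obtain ⟨k2, p2, hp2, hw2, hk2⟩ := Paper.gdist_attained hunw hD2
    have hsum : (k1 : ℝ≥0∞) + (k2 : ℝ≥0∞) ≤ (h : ℝ≥0∞) := by rw [hk1, hk2]; exact hv
    have hk1h : (k1 : ℝ≥0∞) ≤ (h : ℝ≥0∞) := le_self_add.trans hsum
    -- every node of p1 is in R
    have hp1R : ∀ u ∈ p1, u ∈ R := by
      intro u hu
      obtain ⟨q1, q2, hq1, hq2, hwq, _, _⟩ := Paper.split_path w hp1 hu
      apply hR
      calc Paper.gdist w x u ≤ Paper.pathWeight w q1 := Paper.gdist_le_pathWeight w hq1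
        _ ≤ Paper.pathWeight w q1 + Paper.pathWeight w q2 := le_self_add
        _ = (k1 : ℝ≥0∞) := by rw [hwq, hw1]
        _ ≤ (h : ℝ≥0∞) := hk1h
    -- every node of p2 is in R
    have hp2R : ∀ u ∈ p2, u ∈ R := by
      intro u hu
      obtain ⟨q1, q2, hq1, hq2, hwq, _, _⟩ := Paper.split_path w hp2 hu
      obtain ⟨r, hr, hwr, _⟩ := Paper.concat_path w hp1 hq1
      apply hR
      calc Paper.gdist w x u ≤ Paper.pathWeight w r := Paper.gdist_le_pathWeight w hr
        _ = Paper.pathWeight w p1 + Paper.pathWeight w q1 := hwr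
        _ ≤ Paper.pathWeight w p1 + (Paper.pathWeight w q1 + Paper.pathWeight w q2) :=
            add_le_add_right le_self_add _
        _ = (k1 : ℝ≥0∞) + (k2 : ℝ≥0∞) := by rw [hw1, hwq, hw2]
        _ ≤ (h : ℝ≥0∞) := hsum
    have hh_le : (h : ℝ≥0∞) ≤ ((istar * h : ℕ) : ℝ≥0∞) := by
      exact_mod_cast Nat.le_mul_of_pos_left h (by omega)
    -- every node of p1 is in B
    have hp1B : ∀ u ∈ p1, u ∈ B := by
      intro u hu
      obtain ⟨q1, q2, hq1, hq2, hwq, hm1, hm2⟩ := Paper.split_path w hp1 hu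
      obtain ⟨r, hr, hwr, hmr⟩ := Paper.concat_path w hq2 hp2
      have hrR : ∀ z ∈ r, z ∈ R := fun z hz =>
        (hmr z hz).elim (fun h' => hp1R z (hm2 z h')) (hp2R z)
      rw [hB]
      refine ⟨hp1R u hu, ?_⟩
      calc Paper.gdist (Paper.inducedW w R) u y
          ≤ Paper.pathWeight (Paper.inducedW w R) r := Paper.gdist_le_pathWeight _ hr
        _ = Paper.pathWeight w r := Paper.pathWeight_inducedW w R r hrR
        _ = Paper.pathWeight w q2 + Paper.pathWeight w p2 := hwr
        _ ≤ (Paper.pathWeight w q1 + Paper.pathWeight w q2) + Paper.pathWeight w p2 :=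
            add_le_add_left le_add_self _
        _ = (k1 : ℝ≥0∞) + (k2 : ℝ≥0∞) := by rw [hwq, hw1, hw2]
        _ ≤ (h : ℝ≥0∞) := hsum
        _ ≤ ((istar * h : ℕ) : ℝ≥0∞) := hh_le
    have hvp1 : v ∈ p1 := by
      obtain ⟨_, _, hlast⟩ := hp1
      obtain ⟨hne, heq⟩ := List.mem_getLast?_eq_getLast (x := v) (by rw [hlast]; rfl)
      rw [heq]
      exact List.getLast_mem hne
    rw [hF]
    refine ⟨hp1B v hvp1, ?_⟩
    calc Paper.gdist (Paper.inducedW w B) x v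
        ≤ Paper.pathWeight (Paper.inducedW w B) p1 := Paper.gdist_le_pathWeight _ hp1
      _ = Paper.pathWeight w p1 := Paper.pathWeight_inducedW w B p1 hp1B
      _ = (k1 : ℝ≥0∞) := hw1
      _ ≤ (h : ℝ≥0∞) := hk1h
  · -- upper inclusion
    intro v hvF
    rw [hF] at hvF
    obtain ⟨hvB, hdB⟩ := hvF
    rw [hB] at hvB
    obtain ⟨hvR, hdR⟩ := hvB
    have h1 : Paper.gdist w x v ≤ (h : ℝ≥0∞) :=
      (Paper.gdist_mono (Paper.le_inducedW w B) x v).trans hdB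
    have h2 : Paper.gdist w v y ≤ ((istar * h : ℕ) : ℝ≥0∞) :=
      (Paper.gdist_mono (Paper.le_inducedW w R) v y).trans hdR
    have hL0 : (0 : ℝ) ≤ Real.logb 2 m :=
      Real.logb_nonneg (by norm_num) (by exact_mod_cast Nat.one_le_of_lt hm)
    have hceil : (⌈Real.logb 2 m⌉₊ : ℝ) < Real.logb 2 m + 1 := Nat.ceil_lt_add_one hL0
    have hkey : (((istar + 1) * h : ℕ) : ℝ≥0∞) ≤
        ENNReal.ofReal (Real.logb 2 m + 3) * (h : ℝ≥0∞) := by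
      calc (((istar + 1) * h : ℕ) : ℝ≥0∞) = ((istar + 1 : ℕ) : ℝ≥0∞) * (h : ℝ≥0∞) := by
            push_cast; ring
        _ ≤ ENNReal.ofReal (Real.logb 2 m + 3) * (h : ℝ≥0∞) := by
            refine mul_le_mul_left ?_ _
            rw [← ENNReal.ofReal_natCast (istar + 1)]
            refine ENNReal.ofReal_le_ofReal ?_
            push_cast
            have : (istar : ℝ) ≤ (⌈Real.logb 2 m⌉₊ : ℝ) + 1 := by exact_mod_cast histar
            linarith
      done
    calc Paper.gdist w x v + Paper.gdist w v y
        ≤ (h : ℝ≥0∞) + ((istar * h : ℕ) : ℝ≥0∞) := add_le_add h1 h2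
      _ = (((istar + 1) * h : ℕ) : ℝ≥0∞) := by push_cast; ring
      _ ≤ ENNReal.ofReal (Real.logb 2 m + 3) * (h : ℝ≥0∞) := hkey
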